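/- For every d ≥ 1 there is a constant C = C(d) such that for all n ≥ 1, |ψ(B_n) − (d/(d+2)) ω_d^{−2/d} n^{1+2/d}| ≤ C n^{1+1/d}. -/

import Mathlib

open scoped BigOperators Pointwise symmDiff
open MeasureTheory Filter

noncomputable section
open scoped Classical
namespace RotorRouterPaper

/-- Sites of the lattice `ℤ^d`. -/
abbrev Site (d : ℕ) := Fin d → ℤ

/-- The `i`-th standard basis vector of `ℤ^d`. -/
def unitVec (d : ℕ) (i : Fin d) : Site d := fun j => if j = i then 1 else 0

/-- Squared Euclidean norm of a lattice point. -/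
def nsq {d : ℕ} (x : Site d) : ℝ := ∑ i, ((x i : ℝ)) ^ 2

/-- Euclidean norm of a lattice point. -/
def enorm {d : ℕ} (x : Site d) : ℝ := Real.sqrt (nsq x)

/-- Adjacency `x ∼ y`: Euclidean distance one. -/
def Adj {d : ℕ} (x y : Site d) : Prop := nsq (x - y) = 1

/-- `ω_d`, the Lebesgue volume of the unit ball in `ℝ^d`. -/
def ballVol (d : ℕ) : ℝ := (volume (Metric.ball (0 : EuclideanSpace ℝ (Fin d)) 1)).toReal

/-- The lattice ball `B_n = {y ∈ ℤ^d : ω_d ‖y‖^d < n}`. -/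
def lball (d n : ℕ) : Set (Site d) := {y | ballVol d * enorm y ^ d < (n : ℝ)}

/-- Characterization of the expected exit time function of a (finite) region `A ⊆ ℤ^d`:
it vanishes off `A` and its discrete Laplacian is `-1` on `A`. -/
def IsExitFun (d : ℕ) (A : Set (Site d)) (e : Site d → ℝ) : Prop :=
  (∀ x, x ∉ A → e x = 0) ∧
  ∀ x ∈ A, (1 / (2 * (d : ℝ))) * (∑ i, (e (x + unitVec d i) + e (x - unitVec d i))) - e x = -1

/-- The expected exit time function `x ↦ e_x(A)` (the unique function satisfying
`IsExitFun` when `A` is finite). -/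
def exitFun (d : ℕ) (A : Set (Site d)) : Site d → ℝ :=
  if h : ∃ e, IsExitFun d A e then h.choose else 0

/-- `ē(A) = sup_x e_x(A)`. -/
def ebar (d : ℕ) (A : Set (Site d)) : ℝ := sSup (Set.range (exitFun d A))

/-- `φ(n) = sup {ē(A) - e_o(B_n) : A ⊆ ℤ^d, |A| = n}`. -/
def phi (d n : ℕ) : ℝ :=
  sSup {t | ∃ A : Set (Site d), A.Finite ∧ A.ncard = n ∧ t = ebar d A - exitFun d (lball d n) 0}

/-- `Φ(n) = ∑_{j=1}^n φ(j)`. -/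
def PhiSum (d n : ℕ) : ℝ := ∑ j ∈ Finset.Icc 1 n, phi d j

/-- `ψ(A) = ∑_{x ∈ A} ‖x‖²`. -/
def psi {d : ℕ} (A : Set (Site d)) : ℝ := ∑ᶠ x ∈ A, nsq x

/-- A cardinal direction in `ℤ^d`: one of `±e_1, …, ±e_d`. -/
abbrev Dir (d : ℕ) := Fin d × Bool

/-- The lattice step vector of a cardinal direction. -/
def dirVec (d : ℕ) (ε : Dir d) : Site d := if ε.2 then unitVec d ε.1 else -unitVec d ε.1

/-- A configuration of rotor stacks `r` (with `r x i` the direction used for the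
`(i+1)`-st visit to `x`) has discrepancy at most `D` if for every site, direction and `m ≥ 1`,
among the first `m` rotors of the stack each direction occurs `m/(2d)` times up to error `D`. -/
def HasDiscrepancy (d : ℕ) (D : ℝ) (r : Site d → ℕ → Dir d) : Prop :=
  ∀ (x : Site d) (ε : Dir d) (m : ℕ), 1 ≤ m →
    |(({i | i < m ∧ r x i = ε} : Set ℕ).ncard : ℝ) - (m : ℝ) / (2 * (d : ℝ))| ≤ D

/-- One step of rotor-router walk on a state (current position, visit counts so far):
the particle at `p` being visited for the `(c p + 1)`-st time moves in direction
`r p (c p)` and the visit count at `p` increases by one. -/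
def rstep {d : ℕ} (r : Site d → ℕ → Dir d) (s : Site d × (Site d → ℕ)) :
    Site d × (Site d → ℕ) :=
  (s.1 + dirVec d (r s.1 (s.2 s.1)), Function.update s.2 s.1 (s.2 s.1 + 1))

/-- The state after `t` steps of rotor-router walk started at the origin with visit counts `c`. -/
def walkState {d : ℕ} (r : Site d → ℕ → Dir d) (c : Site d → ℕ) (t : ℕ) :
    Site d × (Site d → ℕ) :=
  (rstep r)^[t] (0, c)

/-- The number of steps until the rotor-router walk started at the origin
(with carried-over visit counts `c`) first leaves the region `A`. -/
def exitSteps {d : ℕ} (r : Site d → ℕ → Dir d) (A : Set (Site d)) (c : Site d → ℕ) : ℕ :=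
  sInf {t | (walkState r c t).1 ∉ A}

/-- The state of rotor-router aggregation after `n` particles have walked and settled:
`(aggState r n).1` is the occupied region `A_{n+1}`, `(aggState r n).2.1` the accumulated
visit counts, and `(aggState r n).2.2` the total number `T_n` of steps taken so far. -/
def aggState {d : ℕ} (r : Site d → ℕ → Dir d) : ℕ → Set (Site d) × (Site d → ℕ) × ℕ
  | 0 => ({0}, fun _ => 0, 0)
  | n + 1 =>
      let s := aggState r n
      let τ := exitSteps r s.1 s.2.1
      (insert (walkState r s.2.1 τ).1 s.1, (walkState r s.2.1 τ).2, s.2.2 + τ)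

/-- The region `A_n` of rotor-router aggregation (for `n ≥ 1`). -/
def aggRegion {d : ℕ} (r : Site d → ℕ → Dir d) (n : ℕ) : Set (Site d) :=
  (aggState r (n - 1)).1

/-- `T_n`, the total number of steps taken by the first `n` particles. -/
def totalSteps {d : ℕ} (r : Site d → ℕ → Dir d) (n : ℕ) : ℕ := (aggState r n).2.2

/-- `A^□ = A + [-1/2,1/2]^d ⊆ ℝ^d`. -/
def box (d : ℕ) (A : Set (Site d)) : Set (EuclideanSpace ℝ (Fin d)) :=
  {z | ∃ x ∈ A, ∀ i, |z i - (x i : ℝ)| ≤ 1 / 2}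

/-- The closed Euclidean ball of unit volume centered at the origin of `ℝ^d`. -/
def unitVolBall (d : ℕ) : Set (EuclideanSpace ℝ (Fin d)) :=
  Metric.closedBall 0 (ballVol d ^ (-(1 : ℝ) / (d : ℝ)))

/-- `A ⊆ ℤ^d` is orthoconvex if every line parallel to a coordinate axis meets `A`
in an interval. -/
def Orthoconvex (d : ℕ) (A : Set (Site d)) : Prop :=
  ∀ x ∈ A, ∀ i : Fin d, ∀ k : ℤ, 0 < k → x + k • unitVec d i ∈ A →
    ∀ j : ℤ, 0 < j → j < k → x + j • unitVec d i ∈ A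

/-- The nonnegative orthant `Q ⊆ ℤ^d`. -/
def orthant (d : ℕ) : Set (Site d) := {x | ∀ i, 0 ≤ x i}

/-- The cube `C(o,r) = {x : ‖x‖_∞ ≤ r}`. -/
def cubeSet (d : ℕ) (r : ℕ) : Set (Site d) := {x | ∀ i, |x i| ≤ (r : ℤ)}

/-- The boundary `∂C(o,r) = {x : ‖x‖_∞ = r + 1 and x ∼ y for some y ∈ C(o,r)}`. -/
def cubeBdry (d : ℕ) (r : ℕ) : Set (Site d) :=
  {x | (∀ i, |x i| ≤ (r : ℤ) + 1) ∧ (∃ i, |x i| = (r : ℤ) + 1) ∧ ∃ y ∈ cubeSet d r, Adj x y}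

/-- Characterization of `h_r(x) = P_x(T_Q > T_{∂C(o,r)})`: it vanishes on
`Q ∩ (C(o,r) ∪ ∂C(o,r))`, equals `1` on `∂C(o,r) ∖ Q`, is discrete harmonic on
`C(o,r) ∖ Q`, and (as a normalization) vanishes off `C(o,r) ∪ ∂C(o,r)`. -/
def IsOrthHarm (d : ℕ) (r : ℕ) (h : Site d → ℝ) : Prop :=
  (∀ x, x ∉ cubeSet d r ∪ cubeBdry d r → h x = 0) ∧
  (∀ x ∈ orthant d ∩ (cubeSet d r ∪ cubeBdry d r), h x = 0) ∧
  (∀ x ∈ cubeBdry d r \ orthant d, h x = 1) ∧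
  (∀ x ∈ cubeSet d r \ orthant d,
    h x = (1 / (2 * (d : ℝ))) * ∑ i, (h (x + unitVec d i) + h (x - unitVec d i)))

/-- The function `h_r` of the previous characterization. -/
def orthHarm (d : ℕ) (r : ℕ) : Site d → ℝ :=
  if h : ∃ f, IsOrthHarm d r f then h.choose else 0

/-- `p(k,r) = sup {h_r(x) : ‖x‖_∞ ≤ k}`. -/
def pkr (d k r : ℕ) : ℝ :=
  sSup {t | ∃ x : Site d, (∀ i, |x i| ≤ (k : ℤ)) ∧ t = orthHarm d r x}

/-- The exponent `γ_d` of Theorem 3.1. -/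
def gam (d : ℕ) : ℝ :=
  if d = 1 then 1 else if d = 2 then 1 / 3
  else (2 : ℝ) ^ (-(d : ℝ)) / (2 * (d : ℝ) ^ 2 * Real.log 3)


/-! Each lattice point `x` is the centre of a half-open unit cube on which `‖z‖²` differs
from `‖x‖²` by `O(‖x‖ + √d)`, and the union of these cubes over `B_n` lies between the
Euclidean balls of radii `R ∓ √d`, where `R = (n / ω_d) ^ (1 / d)` is the radius of the ball of
volume `n`. Since `∫_{‖z‖ < r} ‖z‖² dz = ω_d d / (d + 2) r ^ (d + 2)`, the integral over
the ball of radius `R` is the main term, and both the rounding error and the gap between the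
balls are `O(R ^ (d + 1)) = O(n ^ (1 + 1 / d))`. -/

open Metric Set

section NormSqOnBalls

variable {E : Type*} [NormedAddCommGroup E] [NormedSpace ℝ E] [MeasurableSpace E] [BorelSpace E]
  [FiniteDimensional ℝ E] (μ : Measure E) [μ.IsAddHaarMeasure]

local notation "dim" => Module.finrank ℝ E

theorem integral_norm_sq_ball [Nontrivial E] {r : ℝ} (hr : 0 ≤ r) :
    ∫ z in ball (0 : E) r, ‖z‖ ^ 2 ∂μ
      = μ.real (ball 0 1) * (dim / (dim + 2)) * r ^ (dim + 2) := by
  have h_dim : dim - 1 + 2 = dim + 1 := by have : 1 ≤ dim := Module.finrank_pos; omega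
  have h_indicator : ∫ z in ball (0 : E) r, ‖z‖ ^ 2 ∂μ
      = ∫ z, (Ico 0 r).indicator (fun y : ℝ => y ^ 2) ‖z‖ ∂μ := by
    rw [← integral_indicator measurableSet_ball]
    congr 1 with z
    by_cases hz : ‖z‖ < r <;> simp [indicator, hz]
  have h_radial :
      ∫ y in Ioi (0 : ℝ), y ^ (dim - 1) • (Ico 0 r).indicator (fun y : ℝ => y ^ 2) y
        = ∫ y in (0 : ℝ)..r, y ^ (dim + 1) := by
    rw [intervalIntegral.integral_of_le hr, integral_Ioc_eq_integral_Ioo,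
      ← integral_indicator measurableSet_Ioo, ← integral_indicator measurableSet_Ioi]
    congr 1 with y
    by_cases h0 : 0 < y
    · by_cases hr : y < r <;> simp [indicator, h0, hr, h0.le, ← pow_add, h_dim]
    · simp [indicator, h0]
  rw [h_indicator, integral_fun_norm_addHaar, h_radial, integral_pow, zero_pow (by omega),
    sub_zero, nsmul_eq_mul, smul_eq_mul]
  push_cast
  field_simp
  ring

theorem setIntegral_norm_sq_mono {s t : Set E} {ρ : ℝ} (hst : s ⊆ t) (ht : t ⊆ ball 0 ρ) :
    ∫ z in s, ‖z‖ ^ 2 ∂μ ≤ ∫ z in t, ‖z‖ ^ 2 ∂μ :=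
  setIntegral_mono_set
    (((continuous_norm.pow 2).continuousOn.integrableOn_compact
      (isCompact_closedBall 0 ρ)).mono_set (ht.trans ball_subset_closedBall))
    (.of_forall fun _ => by positivity) hst.eventuallyLE

theorem abs_setIntegral_norm_sq_sub_ball_le [Nontrivial E] {U : Set E} {R δ : ℝ} (hR : 0 ≤ R)
    (hδ : 0 ≤ δ) (hU_inner : ball 0 (R - δ) ⊆ U) (hU_outer : U ⊆ ball 0 (R + δ)) :
    |∫ z in U, ‖z‖ ^ 2 ∂μ - ∫ z in ball 0 R, ‖z‖ ^ 2 ∂μ|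
      ≤ μ.real (ball 0 1) * dim * (2 * δ) * (R + δ) ^ (dim + 1) := by
  set r₀ := max (R - δ) 0 with hr₀_def
  have hr₀ : 0 ≤ r₀ := le_max_right _ _
  have hr₀_le : r₀ ≤ R := max_le (by linarith) hR
  have h_inner : ball (0 : E) r₀ ⊆ U := by
    rcases le_total (R - δ) 0 with h | h
    · simp [hr₀_def, max_eq_right h]
    · rwa [hr₀_def, max_eq_left h]
  have hR_outer : ball (0 : E) R ⊆ ball 0 (R + δ) := ball_subset_ball (by linarith)
  have h_pow :
      (R + δ) ^ (dim + 2) - r₀ ^ (dim + 2) ≤ (2 * δ) * (dim + 2) * (R + δ) ^ (dim + 1) := by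
    calc _ ≤ |R + δ - r₀| * (dim + 2 : ℕ) * max |R + δ| |r₀| ^ (dim + 2 - 1) :=
          (le_abs_self _).trans (abs_pow_sub_pow_le ..)
      _ ≤ (2 * δ) * (dim + 2) * (R + δ) ^ (dim + 1) := by
        rw [abs_of_nonneg (by linarith), abs_of_nonneg (by linarith), abs_of_nonneg hr₀,
          max_eq_left (by linarith)]
        push_cast
        gcongr
        linarith [le_max_left (R - δ) 0]
  have h_gap : μ.real (ball 0 1) * (dim / (dim + 2)) * ((R + δ) ^ (dim + 2) - r₀ ^ (dim + 2))
      ≤ μ.real (ball 0 1) * dim * (2 * δ) * (R + δ) ^ (dim + 1) := by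
    calc _ ≤ μ.real (ball 0 1) * (dim / (dim + 2))
          * ((2 * δ) * (dim + 2) * (R + δ) ^ (dim + 1)) := by gcongr
      _ = _ := by field_simp
  have hU_lower := setIntegral_norm_sq_mono μ h_inner hU_outer
  have hU_upper := setIntegral_norm_sq_mono μ hU_outer subset_rfl
  have hR_lower := setIntegral_norm_sq_mono μ (ball_subset_ball hr₀_le) hR_outer
  have hR_upper := setIntegral_norm_sq_mono μ hR_outer subset_rfl
  rw [integral_norm_sq_ball μ hr₀] at hU_lower hR_lower
  rw [integral_norm_sq_ball μ (r := R + δ) (by linarith)] at hU_upper hR_upper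
  rw [abs_sub_le_iff]
  constructor <;> nlinarith

end NormSqOnBalls

section LatticeCubes

variable {d : ℕ}

def toEuclidean (x : Site d) : EuclideanSpace ℝ (Fin d) := WithLp.toLp 2 fun i => (x i : ℝ)

theorem nsq_nonneg (x : Site d) : 0 ≤ nsq x :=
  Finset.sum_nonneg fun _ _ => sq_nonneg _

theorem sq_enorm (x : Site d) : enorm x ^ 2 = nsq x :=
  Real.sq_sqrt (nsq_nonneg x)

theorem norm_toEuclidean (x : Site d) : ‖toEuclidean x‖ = enorm x := by
  simp [EuclideanSpace.norm_eq, enorm, nsq, toEuclidean, sq_abs]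

theorem abs_le_enorm (x : Site d) (i : Fin d) : |(x i : ℝ)| ≤ enorm x :=
  Real.abs_le_sqrt (Finset.single_le_sum (fun j _ => sq_nonneg (x j : ℝ)) (Finset.mem_univ i))

theorem finite_setOf_enorm_lt (R : ℝ) : {x : Site d | enorm x < R}.Finite := by
  refine (Set.finite_Icc (fun _ => -⌈R⌉) (fun _ => ⌈R⌉)).subset fun x hx => ?_
  have h i : |x i| ≤ ⌈R⌉ := by
    exact_mod_cast (abs_le_enorm x i).trans (hx.le.trans (Int.le_ceil R))
  exact ⟨fun i => (abs_le.1 (h i)).1, fun i => (abs_le.1 (h i)).2⟩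

/-- Half-open, so that the cubes around the lattice points tile `ℝ^d`. -/
def cube (x : Site d) : Set (EuclideanSpace ℝ (Fin d)) :=
  (MeasurableEquiv.toLp 2 (Fin d → ℝ)).symm ⁻¹'
    univ.pi fun i => Ico ((x i : ℝ) - 2⁻¹) ((x i : ℝ) + 2⁻¹)

theorem mem_cube {x : Site d} {z : EuclideanSpace ℝ (Fin d)} :
    z ∈ cube x ↔ ∀ i, (x i : ℝ) - 2⁻¹ ≤ z i ∧ z i < (x i : ℝ) + 2⁻¹ := by
  simp [cube, Set.mem_pi]

theorem measurableSet_cube (x : Site d) : MeasurableSet (cube x) :=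
  (MeasurableSet.univ_pi fun _ => measurableSet_Ico).preimage (MeasurableEquiv.measurable _)

theorem volume_cube (x : Site d) : volume (cube x) = 1 := by
  rw [cube, (EuclideanSpace.volume_preserving_symm_measurableEquiv_toLp
    (Fin d)).measure_preimage_equiv, volume_pi_pi]
  norm_num [Real.volume_Ico]

theorem pairwise_disjoint_cube : Pairwise fun x y : Site d => Disjoint (cube x) (cube y) := by
  intro x y hxy
  rw [Set.disjoint_left]
  intro z hzx hzy
  obtain ⟨i, hi⟩ := Function.ne_iff.1 hxy
  have h_sep : (1 : ℝ) ≤ |(x i : ℝ) - y i| := by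
    exact_mod_cast Int.one_le_abs (sub_ne_zero.2 hi)
  have := mem_cube.1 hzx i
  have := mem_cube.1 hzy i
  exact h_sep.not_gt (abs_lt.2 ⟨by linarith, by linarith⟩)

theorem mem_cube_floor (z : EuclideanSpace ℝ (Fin d)) : z ∈ cube fun i => ⌊z i + 2⁻¹⌋ :=
  mem_cube.2 fun i =>
    ⟨by linarith [Int.floor_le (z i + 2⁻¹)],
      by linarith [Int.lt_floor_add_one (z i + 2⁻¹)]⟩

theorem norm_sub_toEuclidean_le {x : Site d} {z : EuclideanSpace ℝ (Fin d)} (hz : z ∈ cube x) :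
    ‖z - toEuclidean x‖ ≤ √d := by
  have h_coord i : ‖(z - toEuclidean x) i‖ ^ 2 ≤ 1 := by
    obtain ⟨h₁, h₂⟩ := mem_cube.1 hz i
    simp only [toEuclidean, PiLp.sub_apply, Real.norm_eq_abs, sq_abs]
    nlinarith
  rw [EuclideanSpace.norm_eq]
  exact Real.sqrt_le_sqrt ((Finset.sum_le_sum fun i _ => h_coord i).trans_eq (by simp))

theorem abs_sq_norm_sub_nsq_le {x : Site d} {z : EuclideanSpace ℝ (Fin d)} (hz : z ∈ cube x) :
    |‖z‖ ^ 2 - nsq x| ≤ √d * (2 * enorm x + √d) := by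
  have h_dist : |‖z‖ - enorm x| ≤ √d := by
    rw [← norm_toEuclidean]
    exact (abs_norm_sub_norm_le _ _).trans (norm_sub_toEuclidean_le hz)
  have h_sum : |‖z‖ + enorm x| ≤ 2 * enorm x + √d := by
    have hx : 0 ≤ enorm x := Real.sqrt_nonneg _
    rw [abs_of_nonneg (by positivity)]
    linarith [(abs_le.1 h_dist).2]
  rw [← sq_enorm, sq_sub_sq, abs_mul, mul_comm]
  exact mul_le_mul h_dist h_sum (abs_nonneg _) (Real.sqrt_nonneg _)

theorem integrableOn_cube_sq_norm (x : Site d) :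
    IntegrableOn (fun z : EuclideanSpace ℝ (Fin d) => ‖z‖ ^ 2) (cube x) :=
  ((continuous_norm.pow 2).continuousOn.integrableOn_compact
    (isCompact_closedBall (toEuclidean x) √d)).mono_set
    fun _ hz => mem_closedBall_iff_norm.2 (norm_sub_toEuclidean_le hz)

theorem abs_setIntegral_cube_sub_nsq_le (x : Site d) :
    |(∫ z in cube x, ‖z‖ ^ 2) - nsq x| ≤ √d * (2 * enorm x + √d) := by
  have h_fin : volume (cube x) < ⊤ := by simp [volume_cube]
  have h_vol : volume.real (cube x) = 1 := by simp [measureReal_def, volume_cube]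
  have h_sub : ∫ z in cube x, (‖z‖ ^ 2 - nsq x) = (∫ z in cube x, ‖z‖ ^ 2) - nsq x := by
    rw [integral_sub (integrableOn_cube_sq_norm x) (integrableOn_const h_fin.ne),
      setIntegral_const, h_vol, one_smul]
  rw [← h_sub, ← Real.norm_eq_abs]
  simpa [h_vol] using norm_setIntegral_le_of_norm_le_const (f := fun z => ‖z‖ ^ 2 - nsq x) h_fin
    fun z hz => abs_sq_norm_sub_nsq_le hz

end LatticeCubes

theorem ballVol_eq_measureReal (d : ℕ) :
    ballVol d = volume.real (ball (0 : EuclideanSpace ℝ (Fin d)) 1) := rfl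

theorem ballVol_pos (d : ℕ) : 0 < ballVol d :=
  ENNReal.toReal_pos (measure_ball_pos volume 0 one_pos).ne' measure_ball_lt_top.ne

section FinsetOfCubes

variable {d : ℕ} {s : Finset (Site d)} {R : ℝ}

theorem biUnion_cube_subset_ball (hs : ∀ x ∈ s, enorm x < R) :
    ⋃ x ∈ s, cube x ⊆ ball 0 (R + √d) := by
  simp only [iUnion_subset_iff]
  intro x hx z hz
  rw [mem_ball_zero_iff]
  linarith [norm_le_norm_add_norm_sub' z (toEuclidean x), norm_toEuclidean x, hs x hx,
    norm_sub_toEuclidean_le hz]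

theorem ball_subset_biUnion_cube (hs : ∀ x, enorm x < R → x ∈ s) :
    ball 0 (R - √d) ⊆ ⋃ x ∈ s, cube x := by
  intro z hz
  set x : Site d := fun i => ⌊z i + 2⁻¹⌋
  have hz_cube : z ∈ cube x := mem_cube_floor z
  refine mem_biUnion (hs x ?_) hz_cube
  rw [mem_ball_zero_iff] at hz
  linarith [norm_le_norm_add_norm_sub z (toEuclidean x), norm_toEuclidean x,
    norm_sub_toEuclidean_le hz_cube]

theorem card_le_ballVol_mul [NeZero d] (hR : 0 ≤ R) (hs : ∀ x ∈ s, enorm x < R) :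
    (s.card : ℝ) ≤ ballVol d * (R + √d) ^ d := by
  have h_union : volume.real (⋃ x ∈ s, cube x) = s.card := by
    rw [measureReal_biUnion_finset (fun x _ y _ h => pairwise_disjoint_cube h)
      (fun x _ => measurableSet_cube x) (fun x _ => by simp [volume_cube])]
    simp [measureReal_def, volume_cube]
  have h_ball : volume.real (ball (0 : EuclideanSpace ℝ (Fin d)) (R + √d))
      = ballVol d * (R + √d) ^ d := by
    have hd : 0 < √(d : ℝ) := Real.sqrt_pos.2 (Nat.cast_pos.2 (NeZero.pos d))
    rw [measureReal_def, Measure.addHaar_ball_of_pos _ _ (by positivity), ENNReal.toReal_mul,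
      ENNReal.toReal_ofReal (by positivity), finrank_euclideanSpace_fin, ballVol, mul_comm]
  rw [← h_union, ← h_ball]
  exact measureReal_mono (biUnion_cube_subset_ball hs) measure_ball_lt_top.ne

theorem abs_sum_nsq_sub_setIntegral_biUnion_cube_le [NeZero d] (hR : 0 ≤ R)
    (hs : ∀ x ∈ s, enorm x < R) :
    |(∑ x ∈ s, nsq x) - ∫ z in ⋃ x ∈ s, cube x, ‖z‖ ^ 2|
      ≤ 2 * √d * ballVol d * (R + √d) ^ (d + 1) := by
  rw [integral_biUnion_finset s (fun x _ => measurableSet_cube x)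
    (fun x _ y _ h => pairwise_disjoint_cube h) (fun x _ => integrableOn_cube_sq_norm x),
    ← Finset.sum_sub_distrib]
  calc |∑ x ∈ s, (nsq x - ∫ z in cube x, ‖z‖ ^ 2)|
      ≤ ∑ x ∈ s, |nsq x - ∫ z in cube x, ‖z‖ ^ 2| := Finset.abs_sum_le_sum_abs _ _
    _ ≤ ∑ _x ∈ s, 2 * √d * (R + √d) := Finset.sum_le_sum fun x hx => by
        rw [abs_sub_comm]
        refine (abs_setIntegral_cube_sub_nsq_le x).trans ?_
        nlinarith [hs x hx, Real.sqrt_nonneg d]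
    _ = s.card * (2 * √d * (R + √d)) := by rw [Finset.sum_const, nsmul_eq_mul]
    _ ≤ ballVol d * (R + √d) ^ d * (2 * √d * (R + √d)) := by
        gcongr
        exact card_le_ballVol_mul hR hs
    _ = 2 * √d * ballVol d * (R + √d) ^ (d + 1) := by ring

theorem abs_sum_nsq_sub_integral_ball_le [NeZero d] (hR : 0 ≤ R)
    (hs : ∀ x, x ∈ s ↔ enorm x < R) :
    |(∑ x ∈ s, nsq x) - ∫ z in ball (0 : EuclideanSpace ℝ (Fin d)) R, ‖z‖ ^ 2|
      ≤ 2 * √d * (d + 1) * ballVol d * (R + √d) ^ (d + 1) := by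
  have h_cubes := abs_sum_nsq_sub_setIntegral_biUnion_cube_le hR fun x => (hs x).1
  have h_ball := abs_setIntegral_norm_sq_sub_ball_le volume hR (Real.sqrt_nonneg d)
    (ball_subset_biUnion_cube fun x => (hs x).2) (biUnion_cube_subset_ball fun x => (hs x).1)
  rw [finrank_euclideanSpace_fin, ← ballVol_eq_measureReal] at h_ball
  calc _ ≤ |(∑ x ∈ s, nsq x) - ∫ z in ⋃ x ∈ s, cube x, ‖z‖ ^ 2|
        + |(∫ z in ⋃ x ∈ s, cube x, ‖z‖ ^ 2) - ∫ z in ball 0 R, ‖z‖ ^ 2| :=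
          abs_sub_le _ _ _
    _ ≤ _ := add_le_add h_cubes h_ball
    _ = _ := by ring

end FinsetOfCubes

section LatticeBall

variable {d : ℕ}

/-- The radius of the Euclidean ball of volume `n`. -/
def lballRadius (d n : ℕ) : ℝ := ((n : ℝ) / ballVol d) ^ (1 / d : ℝ)

theorem lballRadius_nonneg (d n : ℕ) : 0 ≤ lballRadius d n :=
  Real.rpow_nonneg (div_nonneg n.cast_nonneg (ballVol_pos d).le) _

theorem lball_eq [NeZero d] (n : ℕ) : lball d n = {x | enorm x < lballRadius d n} := by
  ext x
  have hω := ballVol_pos d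
  have hx : 0 ≤ enorm x := Real.sqrt_nonneg _
  change ballVol d * enorm x ^ d < n ↔ enorm x < lballRadius d n
  rw [lballRadius, one_div,
    Real.lt_rpow_inv_iff_of_pos hx (by positivity) (Nat.cast_pos.2 (NeZero.pos d)),
    Real.rpow_natCast, lt_div_iff₀' hω]

theorem integral_norm_sq_ball_lballRadius [NeZero d] (n : ℕ) :
    ∫ z in ball (0 : EuclideanSpace ℝ (Fin d)) (lballRadius d n), ‖z‖ ^ 2
      = (d : ℝ) / ((d : ℝ) + 2) * ballVol d ^ (-(2 : ℝ) / (d : ℝ))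
          * (n : ℝ) ^ (1 + 2 / (d : ℝ)) := by
  have hω := ballVol_pos d
  have hd : (d : ℝ) ≠ 0 := NeZero.ne _
  have h_exp : 1 / (d : ℝ) * ((d + 2 : ℕ) : ℝ) = 1 + 2 / d := by
    push_cast
    field_simp
  rw [integral_norm_sq_ball volume (lballRadius_nonneg d n), finrank_euclideanSpace_fin,
    ← ballVol_eq_measureReal, lballRadius, ← Real.rpow_natCast,
    ← Real.rpow_mul (by positivity), h_exp, Real.div_rpow (by positivity) hω.le,
    Real.rpow_add hω, Real.rpow_one, neg_div,
    Real.rpow_neg hω.le]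
  field_simp

theorem lballRadius_add_sqrt_pow_le [NeZero d] {n : ℕ} (hn : 1 ≤ n) :
    (lballRadius d n + √d) ^ (d + 1)
      ≤ (ballVol d ^ (-(1 : ℝ) / d) + √d) ^ (d + 1) * (n : ℝ) ^ (1 + 1 / (d : ℝ)) := by
  have hω := ballVol_pos d
  have hn' : (1 : ℝ) ≤ n := by exact_mod_cast hn
  have h_one : 1 ≤ (n : ℝ) ^ (1 / d : ℝ) := Real.one_le_rpow hn' (by positivity)
  have h_radius : lballRadius d n = ballVol d ^ (-(1 : ℝ) / d) * (n : ℝ) ^ (1 / d : ℝ) := by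
    rw [lballRadius, Real.div_rpow (by positivity) hω.le, neg_div, Real.rpow_neg hω.le,
      div_eq_inv_mul]
  have h_pow : ((n : ℝ) ^ (1 / d : ℝ)) ^ (d + 1) = (n : ℝ) ^ (1 + 1 / (d : ℝ)) := by
    rw [← Real.rpow_natCast, ← Real.rpow_mul (by positivity)]
    congr 1
    push_cast
    field_simp [NeZero.ne (d : ℝ)]
  calc (lballRadius d n + √d) ^ (d + 1)
      ≤ ((ballVol d ^ (-(1 : ℝ) / d) + √d) * (n : ℝ) ^ (1 / d : ℝ)) ^ (d + 1) := by
        rw [h_radius, add_mul]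
        gcongr
        exact le_mul_of_one_le_right (Real.sqrt_nonneg _) h_one
    _ = _ := by rw [mul_pow, h_pow]

end LatticeBall

theorem psi_lball_asymp (d : ℕ) (hd : 1 ≤ d) :
    ∃ C : ℝ, ∀ n : ℕ, 1 ≤ n →
      |psi (lball d n) - (d : ℝ) / ((d : ℝ) + 2) * ballVol d ^ (-(2 : ℝ) / (d : ℝ))
          * (n : ℝ) ^ (1 + 2 / (d : ℝ))|
        ≤ C * (n : ℝ) ^ (1 + 1 / (d : ℝ)) := by
  have : NeZero d := ⟨by omega⟩
  refine ⟨2 * √d * (d + 1) * ballVol d * (ballVol d ^ (-(1 : ℝ) / d) + √d) ^ (d + 1),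
    fun n hn => ?_⟩
  have h_fin : (lball d n).Finite := by
    rw [lball_eq]
    exact finite_setOf_enorm_lt _
  rw [psi, finsum_mem_eq_finite_toFinset_sum _ h_fin, ← integral_norm_sq_ball_lballRadius]
  calc _ ≤ 2 * √d * (d + 1) * ballVol d * (lballRadius d n + √d) ^ (d + 1) :=
        abs_sum_nsq_sub_integral_ball_le (lballRadius_nonneg d n) fun x => by simp [lball_eq]
    _ ≤ _ := by
        rw [mul_assoc _ (_ ^ _)]
        have := ballVol_pos d
        gcongr
        exact lballRadius_add_sqrt_pow_le hn

end RotorRouterPaper
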